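/- arXiv:2007.14423 — 3 statements merged into one kernel-verified Lean document; each statement's English description precedes it below -/
import Mathlib

section
/- Special soundness of the proof of correct encryption: let G generate a cyclic group of prime order q, and Y, D, E, T, A_3 be group elements. Suppose there are two accepting transcripts with the same commitments (T, A_3) and distinct challenges e ≠ e' (in Z_q): z_1·G + z_2·Y = T + e·D, z_2·G = A_3 + e·E, z_1'·G + z_2'·Y = T + e'·D, z_2'·G = A_3 + e'·E. Then setting x = (z_1 - z_1')/(e - e') and r = (z_2 - z_2')/(e - e') in Z_q, we have D = x·G + r·Y and E = r·G. -/
theorem eq_inv_sub_smul_sub_of_eq_add_smul {K M : Type*} [DivisionRing K] [AddCommGroup M]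
    [Module K M] {T D u u' : M} {e e' : K} (hne : e ≠ e') (h : u = T + e • D)
    (h' : u' = T + e' • D) : D = (e - e')⁻¹ • (u - u') := by
  have hdiff : u - u' = (e - e') • D := by rw [h, h', sub_smul]; abel
  rw [hdiff, inv_smul_smul₀ (sub_ne_zero.mpr hne)]

/-- Special soundness of the proof of correct encryption: from two accepting
transcripts with the same commitments and distinct challenges, the witness
`(x, r)` is extracted. -/
theorem correct_encryption_special_soundness (q : ℕ) [Fact q.Prime]
    (Gr : Type) [AddCommGroup Gr] [Module (ZMod q) Gr]
    (G Y D E T A₃ : Gr) (e e' z₁ z₂ z₁' z₂' : ZMod q) (hne : e ≠ e')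
    (h1 : z₁ • G + z₂ • Y = T + e • D) (h2 : z₂ • G = A₃ + e • E)
    (h1' : z₁' • G + z₂' • Y = T + e' • D) (h2' : z₂' • G = A₃ + e' • E) :
    D = ((z₁ - z₁') / (e - e')) • G + ((z₂ - z₂') / (e - e')) • Y ∧
      E = ((z₂ - z₂') / (e - e')) • G := by
  constructor
  · rw [eq_inv_sub_smul_sub_of_eq_add_smul hne h1 h1']
    module
  · rw [eq_inv_sub_smul_sub_of_eq_add_smul hne h2 h2']
    module
end

section
/- Special soundness of the proof of correct encryption of DLog: let G generate a cyclic group of prime order q, and Y, Q, D, E, A_1, A_2, A_3 be group elements. Suppose two accepting transcripts with the same commitments and distinct challenges e ≠ e' in Z_q: z_1·G = A_1 + e·Q, z_2·G = A_3 + e·E, z_2·Y = A_2 + e·(D - Q), and similarly with primes (z_1', z_2', e'). Then x = (z_1 - z_1')/(e - e') and r = (z_2 - z_2')/(e - e') satisfy Q = x·G, E = r·G, and D - Q = r·Y (hence D = x·G + r·Y when Q = x·G). -/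
theorem sub_smul_eq_sub_smul_of_smul_eq_add_smul {R M : Type*} [Ring R] [AddCommGroup M]
    [Module R M] {a b e e' : R} {A X T : M}
    (ha : a • X = A + e • T) (hb : b • X = A + e' • T) : (a - b) • X = (e - e') • T := by
  rw [sub_smul, sub_smul, ha, hb, add_sub_add_left_eq_sub]

theorem eq_div_smul_of_smul_eq_add_smul {K M : Type*} [Field K] [AddCommGroup M] [Module K M]
    {a b e e' : K} {A X T : M} (hne : e ≠ e')
    (ha : a • X = A + e • T) (hb : b • X = A + e' • T) : T = ((a - b) / (e - e')) • X := by
  rw [div_eq_inv_mul, mul_smul, sub_smul_eq_sub_smul_of_smul_eq_add_smul ha hb,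
    inv_smul_smul₀ (sub_ne_zero.mpr hne)]

/-- Special soundness of the proof of correct encryption of DLog. -/
theorem correct_encryption_dlog_special_soundness (q : ℕ) [Fact q.Prime]
    (Gr : Type) [AddCommGroup Gr] [Module (ZMod q) Gr]
    (G Y Q D E A₁ A₂ A₃ : Gr) (e e' z₁ z₂ z₁' z₂' : ZMod q) (hne : e ≠ e')
    (h1 : z₁ • G = A₁ + e • Q) (h2 : z₂ • G = A₃ + e • E)
    (h3 : z₂ • Y = A₂ + e • (D - Q))
    (h1' : z₁' • G = A₁ + e' • Q) (h2' : z₂' • G = A₃ + e' • E)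
    (h3' : z₂' • Y = A₂ + e' • (D - Q)) :
    Q = ((z₁ - z₁') / (e - e')) • G ∧
      E = ((z₂ - z₂') / (e - e')) • G ∧
      D - Q = ((z₂ - z₂') / (e - e')) • Y :=
  ⟨eq_div_smul_of_smul_eq_add_smul hne h1 h1', eq_div_smul_of_smul_eq_add_smul hne h2 h2',
    eq_div_smul_of_smul_eq_add_smul hne h3 h3'⟩
end

section
/- Special soundness of the Chaum-Pedersen proof: given group elements G_1, H_1, G_2, H_2, a_1, a_2 and two accepting transcripts with distinct challenges e ≠ e' in Z_q, i.e., a_1 = r·G_1 + e·H_1, a_2 = r·G_2 + e·H_2, a_1 = r'·G_1 + e'·H_1, a_2 = r'·G_2 + e'·H_2, the value x = (r' - r)/(e - e') satisfies H_1 = x·G_1 and H_2 = x·G_2. -/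
theorem eq_div_sub_smul_of_smul_add_smul_eq {K M : Type*} [Field K] [AddCommGroup M] [Module K M]
    {r r' e e' : K} (hne : e ≠ e') {G H : M} (h : r • G + e • H = r' • G + e' • H) :
    H = ((r' - r) / (e - e')) • G := by
  have hdiff : (e - e') • H = (r' - r) • G := by
    linear_combination (norm := module) h
  rw [div_eq_inv_mul, mul_smul, ← hdiff, inv_smul_smul₀ (sub_ne_zero.mpr hne)]

/-- Special soundness of the Chaum-Pedersen proof of DDH membership. -/
theorem chaum_pedersen_special_soundness (q : ℕ) [Fact q.Prime]
    (Gr : Type) [AddCommGroup Gr] [Module (ZMod q) Gr]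
    (G₁ H₁ G₂ H₂ a₁ a₂ : Gr) (r r' e e' : ZMod q) (hne : e ≠ e')
    (h1 : a₁ = r • G₁ + e • H₁) (h2 : a₂ = r • G₂ + e • H₂)
    (h1' : a₁ = r' • G₁ + e' • H₁) (h2' : a₂ = r' • G₂ + e' • H₂) :
    H₁ = ((r' - r) / (e - e')) • G₁ ∧ H₂ = ((r' - r) / (e - e')) • G₂ :=
  ⟨eq_div_sub_smul_of_smul_add_smul_eq hne (h1.symm.trans h1'),
    eq_div_sub_smul_of_smul_add_smul_eq hne (h2.symm.trans h2')⟩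
end
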